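/- Consider a finite set A of agents with continuous-time infection times T̃ⱼ ∈ [0,∞] defined by: some agent i₀ has T̃_{i₀} = 0, and for j ≠ i₀, T̃ⱼ = inf over agents i ≠ j and times t ≥ T̃ᵢ such that [t, t+ρ] ⊆ N(i,j), of t + ρ, where N(i,j) ⊆ [0,∞) is the (arbitrary) set of connection times between i and j and ρ > 0. Let a discrete scheme with time step dt < ρ define values T^{(I)}_{j,k} by: T^{(I)}_{j,0} = T̃ⱼ-initial (0 for i₀, ∞ otherwise), and at step k, for each i with kdt ≥ T^{(I)}_{i,k−1} and each j connected to i at time kdt, if the connection interval containing kdt, intersected with [T^{(I)}_{i,k−1}, ∞), has length ≥ ρ and left endpoint t₁, then T^{(I)}_{j,k} is updated to min of its current value and t₁ + ρ. Assume each N(i,j) is a union of intervals and the scheme correctly computes the maximal connection interval containing kdt whenever i,j are connected at kdt. Then for every k ∈ ℕ and every agent j: T̃ⱼ ≤ T^{(I)}_{j,k−1}, and if T̃ⱼ ≤ kdt then T̃ⱼ = T^{(I)}_{j,k−1}. -/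

import Mathlib

/-!
The scheme only ever lowers a value to the end `t₁ + ρ` of a genuine transmission window, so it
never undercuts the continuous-time infection times. Conversely, let `j` be infected in
`(s, s + dt]` with `s = k·dt`. Every transmission window `[t, t + ρ]` into `j` ending in
`(s, s + ρ)` contains `s`; its source was infected by time `t ≤ s`, hence is already exact at
step `k`, and the maximal connection interval around `s` contains the window, so the scheme
proposes a value at most `t + ρ`. As `dt < ρ`, such windows approximate the infimum defining
the infection time of `j`.
-/

open Set ENNReal

theorem le_sInf_of_forall_lt_le {α : Type*} [CompleteLinearOrder α] {S : Set α} {c y : α}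
    (hc : sInf S < c) (h : ∀ x ∈ S, x < c → y ≤ x) : y ≤ sInf S := by
  by_contra! hy
  obtain ⟨x, hxS, hx⟩ := sInf_lt_iff.mp (lt_min hy hc)
  exact (h x hxS (hx.trans_le (min_le_right _ _))).not_gt (hx.trans_le (min_le_left _ _))

section Infection

variable {A : Type}

def infectionCandidates (Ncon : A → A → Set ℝ) (ρ : ℝ) (Ttil : A → ℝ≥0∞) (j : A) :
    Set ℝ≥0∞ :=
  {x | ∃ i, i ≠ j ∧ ∃ t : ℝ, 0 ≤ t ∧ Ttil i ≤ ENNReal.ofReal t ∧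
    Icc t (t + ρ) ⊆ Ncon i j ∧ x = ENNReal.ofReal (t + ρ)}

def schemeCandidates (Ncon : A → A → Set ℝ) (ρ : ℝ) (a b : A → A → ℝ) (s : ℝ)
    (Tprev : A → ℝ≥0∞) (j : A) : Set ℝ≥0∞ :=
  {x | ∃ i, i ≠ j ∧ Tprev i ≤ ENNReal.ofReal s ∧ s ∈ Ncon i j ∧
    ∃ t₁ : ℝ, t₁ = max (a i j) (Tprev i).toReal ∧ ρ ≤ b i j - t₁ ∧
      x = ENNReal.ofReal (t₁ + ρ)}

def IsExactUpTo (Ttil T : A → ℝ≥0∞) (s : ℝ) : Prop :=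
  ∀ j, Ttil j ≤ T j ∧ (Ttil j ≤ ENNReal.ofReal s → Ttil j = T j)

theorem IsExactUpTo.mono {Ttil T : A → ℝ≥0∞} {s s' : ℝ} (h : IsExactUpTo Ttil T s)
    (hs : s' ≤ s) : IsExactUpTo Ttil T s' :=
  fun j => ⟨(h j).1, fun hj => (h j).2 (hj.trans (ofReal_le_ofReal hs))⟩

variable {Ncon : A → A → Set ℝ} {ρ : ℝ} {i0 : A} {Ttil : A → ℝ≥0∞}

theorem infectionTime_le_of_window (hTtil0 : Ttil i0 = 0)
    (hTtil : ∀ j, j ≠ i0 → Ttil j = sInf (infectionCandidates Ncon ρ Ttil j))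
    {i j : A} (hij : i ≠ j) {t : ℝ} (ht : 0 ≤ t) (hi : Ttil i ≤ ENNReal.ofReal t)
    (hwin : Icc t (t + ρ) ⊆ Ncon i j) : Ttil j ≤ ENNReal.ofReal (t + ρ) := by
  by_cases hj : j = i0
  · simp [hj, hTtil0]
  · rw [hTtil j hj]
    exact sInf_le ⟨i, hij, t, ht, hi, hwin, rfl⟩

theorem ofReal_le_infectionTime
    (hTtil : ∀ j, j ≠ i0 → Ttil j = sInf (infectionCandidates Ncon ρ Ttil j))
    {j : A} (hj : j ≠ i0) : ENNReal.ofReal ρ ≤ Ttil j := by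
  rw [hTtil j hj]
  refine le_sInf ?_
  rintro _ ⟨i, -, t, ht, -, -, rfl⟩
  exact ofReal_le_ofReal (by linarith)

theorem isExactUpTo_initial [DecidableEq A] (hρ : 0 < ρ) (hTtil0 : Ttil i0 = 0)
    (hTtil : ∀ j, j ≠ i0 → Ttil j = sInf (infectionCandidates Ncon ρ Ttil j))
    {T₀ : A → ℝ≥0∞} (hT₀ : ∀ j, T₀ j = if j = i0 then 0 else ⊤) {s : ℝ} (hs : s < ρ) :
    IsExactUpTo Ttil T₀ s := by
  intro j
  by_cases hj : j = i0
  · simp [hj, hT₀, hTtil0]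
  · refine ⟨by simp [hT₀, hj], fun hjs => absurd ((ofReal_le_infectionTime hTtil hj).trans hjs) ?_⟩
    exact not_le.mpr ((ofReal_lt_ofReal_iff hρ).mpr hs)

theorem infectionTime_le_sInf_schemeCandidates (hTtil0 : Ttil i0 = 0)
    (hTtil : ∀ j, j ≠ i0 → Ttil j = sInf (infectionCandidates Ncon ρ Ttil j))
    {a b : A → A → ℝ} {s : ℝ}
    (hsub : ∀ i j, s ∈ Ncon i j → Icc (a i j) (b i j) ⊆ Ncon i j)
    {Tprev : A → ℝ≥0∞} (hle : ∀ i, Ttil i ≤ Tprev i) (j : A) :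
    Ttil j ≤ sInf (schemeCandidates Ncon ρ a b s Tprev j) := by
  refine le_sInf ?_
  rintro _ ⟨i, hij, hTi, hsN, t₁, rfl, hρb, rfl⟩
  have hfin : Tprev i ≠ ⊤ := ne_top_of_le_ne_top ofReal_ne_top hTi
  refine infectionTime_le_of_window hTtil0 hTtil hij (toReal_nonneg.trans (le_max_right _ _))
    ?_ ?_
  · calc Ttil i ≤ Tprev i := hle i
      _ = ENNReal.ofReal (Tprev i).toReal := (ofReal_toReal hfin).symm
      _ ≤ _ := ofReal_le_ofReal (le_max_right _ _)
  · exact (Icc_subset_Icc (le_max_left _ _) (by linarith)).trans (hsub i j hsN)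

theorem sInf_schemeCandidates_le_infectionTime (hTtil0 : Ttil i0 = 0)
    (hTtil : ∀ j, j ≠ i0 → Ttil j = sInf (infectionCandidates Ncon ρ Ttil j))
    {a b : A → A → ℝ} {s s' : ℝ}
    (hmax : ∀ i j, s ∈ Ncon i j → ∀ c d : ℝ, c ≤ s → s ≤ d → Icc c d ⊆ Ncon i j →
      a i j ≤ c ∧ d ≤ b i j)
    {Tprev : A → ℝ≥0∞} (hexact : IsExactUpTo Ttil Tprev s) (hs' : s' < s + ρ) {j : A}
    (hj : ENNReal.ofReal s < Ttil j) (hj' : Ttil j ≤ ENNReal.ofReal s') :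
    sInf (schemeCandidates Ncon ρ a b s Tprev j) ≤ Ttil j := by
  have hji0 : j ≠ i0 := by
    rintro rfl
    simp [hTtil0] at hj
  have hpos : 0 < s + ρ := by
    have := (ofReal_lt_ofReal_iff'.mp (hj.trans_le hj')).2
    linarith
  rw [hTtil j hji0] at hj hj' ⊢
  refine le_sInf_of_forall_lt_le (c := ENNReal.ofReal (s + ρ))
    (hj'.trans_lt (ofReal_lt_ofReal_iff'.mpr ⟨hs', hpos⟩)) ?_
  rintro _ ⟨i, hij, t, ht, hTi, hwin, rfl⟩ hlt
  have hts : t < s := by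
    have := (ofReal_lt_ofReal_iff'.mp hlt).1
    linarith
  have hst : s < t + ρ :=
    (ofReal_lt_ofReal_iff'.mp (hj.trans_le (sInf_le ⟨i, hij, t, ht, hTi, hwin, rfl⟩))).1
  have hsN : s ∈ Ncon i j := hwin ⟨hts.le, hst.le⟩
  have hTis : Ttil i ≤ ENNReal.ofReal s := hTi.trans (ofReal_le_ofReal hts.le)
  have hprev : Tprev i = Ttil i := ((hexact i).2 hTis).symm
  obtain ⟨hat, htb⟩ := hmax i j hsN t (t + ρ) hts.le hst.le hwin
  have ht₁ : max (a i j) (Tprev i).toReal ≤ t :=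
    max_le hat (hprev ▸ toReal_le_of_le_ofReal ht hTi)
  calc sInf (schemeCandidates Ncon ρ a b s Tprev j)
      ≤ ENNReal.ofReal (max (a i j) (Tprev i).toReal + ρ) :=
        sInf_le ⟨i, hij, hprev ▸ hTis, hsN, _, rfl, by linarith, rfl⟩
    _ ≤ ENNReal.ofReal (t + ρ) := ofReal_le_ofReal (by linarith)

theorem IsExactUpTo.step (hTtil0 : Ttil i0 = 0)
    (hTtil : ∀ j, j ≠ i0 → Ttil j = sInf (infectionCandidates Ncon ρ Ttil j))
    {a b : A → A → ℝ} {s s' : ℝ}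
    (hsub : ∀ i j, s ∈ Ncon i j → Icc (a i j) (b i j) ⊆ Ncon i j)
    (hmax : ∀ i j, s ∈ Ncon i j → ∀ c d : ℝ, c ≤ s → s ≤ d → Icc c d ⊆ Ncon i j →
      a i j ≤ c ∧ d ≤ b i j)
    {Tprev Tnext : A → ℝ≥0∞}
    (hnext : ∀ j, Tnext j = min (Tprev j) (sInf (schemeCandidates Ncon ρ a b s Tprev j)))
    (hexact : IsExactUpTo Ttil Tprev s) (hs' : s' < s + ρ) : IsExactUpTo Ttil Tnext s' := by
  intro j
  have hlow : Ttil j ≤ Tnext j := hnext j ▸ le_min (hexact j).1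
    (infectionTime_le_sInf_schemeCandidates hTtil0 hTtil hsub (fun i => (hexact i).1) j)
  refine ⟨hlow, fun hj' => le_antisymm hlow ?_⟩
  rw [hnext j]
  by_cases hj : Ttil j ≤ ENNReal.ofReal s
  · exact min_le_of_left_le ((hexact j).2 hj).ge
  · exact min_le_of_right_le
      (sInf_schemeCandidates_le_infectionTime hTtil0 hTtil hmax hexact hs' (not_le.mp hj) hj')

end Infection

theorem stmt_12_general
    (A : Type) [DecidableEq A] (i0 : A)
    (ρ dt : ℝ) (hdt : 0 < dt) (hdtρ : dt < ρ)
    (Ncon : A → A → Set ℝ)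
    (Ttil : A → ℝ≥0∞)
    (hTtil0 : Ttil i0 = 0)
    (hTtil : ∀ j, j ≠ i0 →
      Ttil j = sInf {x : ℝ≥0∞ | ∃ i, i ≠ j ∧ ∃ t : ℝ, 0 ≤ t ∧
        Ttil i ≤ ENNReal.ofReal t ∧ Icc t (t + ρ) ⊆ Ncon i j ∧
        x = ENNReal.ofReal (t + ρ)})
    (T : ℕ → A → ℝ≥0∞)
    (hT0 : ∀ j, T 0 j = if j = i0 then 0 else ⊤)
    -- `a i j k, b i j k` is the maximal connection interval of `i` and `j` containing `k·dt`
    (a b : A → A → ℕ → ℝ)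
    (hab : ∀ i j (k : ℕ), ((k : ℝ) * dt) ∈ Ncon i j →
      a i j k ≤ (k : ℝ) * dt ∧ (k : ℝ) * dt ≤ b i j k ∧
      Icc (a i j k) (b i j k) ⊆ Ncon i j ∧
      (∀ c d : ℝ, c ≤ (k : ℝ) * dt → (k : ℝ) * dt ≤ d → Icc c d ⊆ Ncon i j →
        a i j k ≤ c ∧ d ≤ b i j k))
    -- the step update of the discrete scheme
    (hstep : ∀ k : ℕ, 1 ≤ k → ∀ j,
      T k j = min (T (k - 1) j)
        (sInf {x : ℝ≥0∞ | ∃ i, i ≠ j ∧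
          T (k - 1) i ≤ ENNReal.ofReal ((k : ℝ) * dt) ∧
          ((k : ℝ) * dt) ∈ Ncon i j ∧
          ∃ t₁ : ℝ, t₁ = max (a i j k) (T (k - 1) i).toReal ∧
            ρ ≤ b i j k - t₁ ∧ x = ENNReal.ofReal (t₁ + ρ)})) :
    ∀ k : ℕ, ∀ j,
      Ttil j ≤ T (k - 1) j ∧
      (Ttil j ≤ ENNReal.ofReal ((k : ℝ) * dt) → Ttil j = T (k - 1) j) := by
  have hρ : 0 < ρ := hdt.trans hdtρ
  have key : ∀ k : ℕ, IsExactUpTo Ttil (T k) ((k + 1 : ℕ) * dt) := by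
    intro k
    induction k with
    | zero => exact isExactUpTo_initial hρ hTtil0 hTtil hT0 (by simpa using hdtρ)
    | succ k ih =>
      refine ih.step hTtil0 hTtil (fun i j h => (hab i j _ h).2.2.1)
        (fun i j h => (hab i j _ h).2.2.2) (hstep (k + 1) k.succ_pos) ?_
      push_cast
      linarith
  intro k j
  cases k with
  | zero => exact (key 0).mono (by push_cast; linarith) j
  | succ n => exact key n j

/-- Lemma 7 (`lem:correctness`): inductive invariant of the discrete-time ABM.

`A` is a finite set of agents with initially infected agent `i0`, `ρ` the transmission time,
`dt < ρ` the time step, `Ncon i j` the set of connection times of `i` and `j`.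
`Ttil j ∈ [0,∞]` are the continuous-time infection times, characterized by the infimum
equation below.  The discrete scheme produces values `T k j`; at step `k ≥ 1`, for every
infected agent `i` (i.e. `T (k-1) i ≤ kdt`) connected to `j` at time `kdt`, it considers the
maximal connection interval `[a i j k, b i j k]` containing `kdt`, truncates it on the left
at `t₁ = max (a i j k) (T (k-1) i)`, and if its length is `≥ ρ`, updates `T k j` with
`t₁ + ρ`.  Then for every `k` and `j`: `Ttil j ≤ T (k-1) j`, and if `Ttil j ≤ kdt` then
`Ttil j = T (k-1) j` (with `T (0-1) := T 0`). -/
theorem stmt_12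
    (A : Type) [Fintype A] [DecidableEq A] (i0 : A)
    (ρ dt : ℝ) (hρ : 0 < ρ) (hdt : 0 < dt) (hdtρ : dt < ρ)
    (Ncon : A → A → Set ℝ)
    (Ttil : A → ℝ≥0∞)
    (hTtil0 : Ttil i0 = 0)
    (hTtil : ∀ j, j ≠ i0 →
      Ttil j = sInf {x : ℝ≥0∞ | ∃ i, i ≠ j ∧ ∃ t : ℝ, 0 ≤ t ∧
        Ttil i ≤ ENNReal.ofReal t ∧ Icc t (t + ρ) ⊆ Ncon i j ∧
        x = ENNReal.ofReal (t + ρ)})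
    (T : ℕ → A → ℝ≥0∞)
    (hT0 : ∀ j, T 0 j = if j = i0 then 0 else ⊤)
    -- `a i j k, b i j k` is the maximal connection interval of `i` and `j` containing `k·dt`
    (a b : A → A → ℕ → ℝ)
    (hab : ∀ i j (k : ℕ), ((k : ℝ) * dt) ∈ Ncon i j →
      a i j k ≤ (k : ℝ) * dt ∧ (k : ℝ) * dt ≤ b i j k ∧
      Icc (a i j k) (b i j k) ⊆ Ncon i j ∧
      (∀ c d : ℝ, c ≤ (k : ℝ) * dt → (k : ℝ) * dt ≤ d → Icc c d ⊆ Ncon i j →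
        a i j k ≤ c ∧ d ≤ b i j k))
    -- the step update of the discrete scheme
    (hstep : ∀ k : ℕ, 1 ≤ k → ∀ j,
      T k j = min (T (k - 1) j)
        (sInf {x : ℝ≥0∞ | ∃ i, i ≠ j ∧
          T (k - 1) i ≤ ENNReal.ofReal ((k : ℝ) * dt) ∧
          ((k : ℝ) * dt) ∈ Ncon i j ∧
          ∃ t₁ : ℝ, t₁ = max (a i j k) (T (k - 1) i).toReal ∧
            ρ ≤ b i j k - t₁ ∧ x = ENNReal.ofReal (t₁ + ρ)})) :
    ∀ k : ℕ, ∀ j,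
      Ttil j ≤ T (k - 1) j ∧
      (Ttil j ≤ ENNReal.ofReal ((k : ℝ) * dt) → Ttil j = T (k - 1) j) :=
  stmt_12_general A i0 ρ dt hdt hdtρ Ncon Ttil hTtil0 hTtil T hT0 a b hab hstep
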